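/- For every integer n ≥ 2 there is a group homomorphism d_n : PL_n(ℝ) → ℤ/(n−1)ℤ such that for every f ∈ PL_n(ℝ) and every x ∈ ℤ[1/n], φ_n(f(x)) = φ_n(x) + d_n(f); in particular the quantity φ_n(f(x)) − φ_n(x) is independent of the choice of x ∈ ℤ[1/n]. -/

import Mathlib

noncomputable section

/-- `ℤ[1/n]` realized as a subset of `ℝ`: all reals of the form `a * n^b` with `a b : ℤ`. -/
def zpows (n : ℕ) : Set ℝ := {x : ℝ | ∃ a b : ℤ, x = (a : ℝ) * (n : ℝ) ^ b}

/-- The defining properties of the (unique) ring homomorphism `φₙ : ℤ[1/n] → ℤ/(n-1)ℤ`,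
expressed for a function `φ : ℝ → ZMod (n-1)` restricted to the subset `zpows n`. -/
def IsPhi (n : ℕ) (φ : ℝ → ZMod (n - 1)) : Prop :=
  (∀ x ∈ zpows n, ∀ y ∈ zpows n, φ (x + y) = φ x + φ y) ∧
  (∀ x ∈ zpows n, ∀ y ∈ zpows n, φ (x * y) = φ x * φ y) ∧
  φ 1 = 1

/-- `B` is a discrete subset of `ℝ`: every point of `ℝ` has a neighborhood containing
at most one point of `B`. -/
def LocDiscrete (B : Set ℝ) : Prop := ∀ x : ℝ, ∃ ε > 0, ∀ y ∈ B, |y - x| < ε → y = x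

/-- Membership in `PLₙ(ℝ)`: an orientation-preserving homeomorphism of `ℝ`
(equivalently, a strictly monotone surjection), piecewise linear with breaks in a
discrete subset of `ℤ[1/n]`, all slopes integral powers of `n`, and mapping `ℤ[1/n]`
into itself. -/
def MemPL (n : ℕ) (f : ℝ → ℝ) : Prop :=
  StrictMono f ∧ Function.Surjective f ∧
  (∃ B : Set ℝ, B ⊆ zpows n ∧ LocDiscrete B ∧
    ∀ x ∉ B, ∃ (k : ℤ) (c : ℝ), ∃ ε > 0, ∀ y : ℝ, |y - x| < ε → f y = (n : ℝ) ^ k * y + c) ∧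
  (∀ q ∈ zpows n, f q ∈ zpows n)

/-- Membership in `BPLₙ(ℝ)`: elements of `PLₙ(ℝ)` with bounded support. -/
def MemBPL (n : ℕ) (f : ℝ → ℝ) : Prop :=
  MemPL n f ∧ ∃ M : ℝ, ∀ x : ℝ, M < |x| → f x = x

/-! On a linear piece `f y = n ^ k * y + c` of `f ∈ PLₙ(ℝ)`, the identity `φ (n ^ k) = 1` gives
`φ (f y) - φ (f x) = φ (y - x)`, so `y ↦ φ (f y) - φ y` is constant on the piece within `ℤ[1/n]`.
A function that is locally affine on an interval is affine there, so at a breakpoint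
`x ∈ ℤ[1/n]` the two adjacent pieces both contain `x`; hence `y ↦ φ (f y) - φ y` is locally
constant along `ℤ[1/n]` around every real point, and density of `ℤ[1/n]` in the connected
line `ℝ` makes it constant. That constant is `dₙ f`, and additivity follows by evaluating at
`g 0`. -/

open Set Filter Topology

theorem Dense.apply_eq_of_eventually_const {X Y : Type*} [TopologicalSpace X]
    [PreconnectedSpace X] {S : Set X} (hS : Dense S) {g : X → Y}
    (hg : ∀ x, ∃ w, ∀ᶠ y in 𝓝[S] x, g y = w) {a b : X} (ha : a ∈ S) (hb : b ∈ S) :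
    g a = g b := by
  choose w hw using hg
  have hloc : IsLocallyConstant w := by
    refine (IsLocallyConstant.iff_eventually_eq w).2 fun x => ?_
    filter_upwards [(eventually_nhdsWithin_iff.1 (hw x)).eventually_nhds] with z hz
    have := mem_closure_iff_nhdsWithin_neBot.1 (hS z)
    obtain ⟨y, hyz, hyx⟩ := ((hw z).and (eventually_nhdsWithin_iff.2 hz)).exists
    exact hyz.symm.trans hyx
  rw [(hw a).self_of_nhdsWithin ha, (hw b).self_of_nhdsWithin hb]
  exact hloc.apply_eq_of_preconnectedSpace a b

theorem eventually_deriv_intercept_eq {f : ℝ → ℝ} {x s c : ℝ}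
    (h : ∀ᶠ y in 𝓝 x, f y = s * y + c) :
    ∀ᶠ y in 𝓝 x, (deriv f y, f y - deriv f y * y) = (s, c) := by
  filter_upwards [h.eventually_nhds, h] with y hy hfy
  have hderiv : deriv f y = s := by
    rw [Filter.EventuallyEq.deriv_eq hy]
    simp
  rw [hderiv, hfy]
  simp

-- The slope and intercept of `f`, read off from its derivative, are locally constant on `U`.
theorem IsPreconnected.eqOn_affine_of_eventually_affine {U : Set ℝ} (hU : IsPreconnected U)
    {f : ℝ → ℝ} (hf : ∀ x ∈ U, ∃ s c : ℝ, ∀ᶠ y in 𝓝 x, f y = s * y + c) {x₀ s c : ℝ}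
    (hx₀ : x₀ ∈ U) (h₀ : ∀ᶠ y in 𝓝 x₀, f y = s * y + c) :
    EqOn f (fun y => s * y + c) U := by
  set p : ℝ → ℝ × ℝ := fun y => (deriv f y, f y - deriv f y * y)
  have hp : ∀ x ∈ U, ∀ᶠ y in 𝓝[U] x, p x = p y := by
    intro x hx
    obtain ⟨s', c', h'⟩ := hf x hx
    have hpx := eventually_deriv_intercept_eq h'
    filter_upwards [nhdsWithin_le_nhds hpx] with y hy
    exact hpx.self_of_nhds.trans hy.symm
  intro y hy
  have hpy : p y = (s, c) := by
    rw [hU.induction₂ (fun a b => p a = p b) hp (fun _ _ _ _ _ _ => Eq.trans)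
      (fun _ _ _ _ => Eq.symm) hy hx₀]
    exact (eventually_deriv_intercept_eq h₀).self_of_nhds
  simp only [p, Prod.mk.injEq] at hpy
  linear_combination hpy.2 + y * hpy.1

section ZPows

variable {n : ℕ}

def zpowsSubring (hn : n ≠ 0) : Subring ℝ where
  carrier := zpows n
  zero_mem' := ⟨0, 0, by simp⟩
  one_mem' := ⟨1, 0, by simp⟩
  add_mem' := by
    rintro _ _ ⟨a, b, rfl⟩ ⟨a', b', rfl⟩
    have hn' : (n : ℝ) ≠ 0 := Nat.cast_ne_zero.2 hn
    set m := min b b'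
    have split : ∀ (e : ℤ) (i : ℕ), e - m = i → (n : ℝ) ^ e = n ^ i * n ^ m := fun e i h => by
      rw [← zpow_natCast, ← zpow_add₀ hn', ← h, sub_add_cancel]
    obtain ⟨i, hi⟩ := Int.eq_ofNat_of_zero_le (sub_nonneg.2 (min_le_left b b'))
    obtain ⟨j, hj⟩ := Int.eq_ofNat_of_zero_le (sub_nonneg.2 (min_le_right b b'))
    refine ⟨a * (n : ℤ) ^ i + a' * (n : ℤ) ^ j, m, ?_⟩
    rw [split b i hi, split b' j hj]
    push_cast
    ring
  neg_mem' := by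
    rintro _ ⟨a, b, rfl⟩
    exact ⟨-a, b, by push_cast; ring⟩
  mul_mem' := by
    rintro _ _ ⟨a, b, rfl⟩ ⟨a', b', rfl⟩
    exact ⟨a * a', b + b', by push_cast; rw [zpow_add₀ (Nat.cast_ne_zero.2 hn)]; ring⟩

theorem zpow_mem_zpows (k : ℤ) : (n : ℝ) ^ k ∈ zpows n := ⟨1, k, by simp⟩

theorem dense_zpows (hn : 2 ≤ n) : Dense (zpows n) := by
  have hn1 : (1 : ℝ) < n := by exact_mod_cast hn
  refine (zpowsSubring (n := n) (by omega)).toAddSubgroup.dense_of_not_isolated_zero fun ε hε => ?_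
  obtain ⟨m, hm⟩ := exists_pow_lt_of_lt_one hε (inv_lt_one_of_one_lt₀ hn1)
  refine ⟨(n : ℝ) ^ (-(m : ℤ)), zpow_mem_zpows _, by positivity, ?_⟩
  rwa [zpow_neg, zpow_natCast, ← inv_pow]

end ZPows

namespace IsPhi

variable {n : ℕ} {φ : ℝ → ZMod (n - 1)}

theorem map_zero (hφ : IsPhi n φ) : φ 0 = 0 := by
  have h0 : (0 : ℝ) ∈ zpows n := ⟨0, 0, by simp⟩
  simpa using hφ.1 0 h0 0 h0

theorem map_natCast (hφ : IsPhi n φ) (m : ℕ) : φ m = m := by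
  induction m with
  | zero => simpa using hφ.map_zero
  | succ m ih =>
    have hm : (m : ℝ) ∈ zpows n := ⟨m, 0, by simp⟩
    have h1 : (1 : ℝ) ∈ zpows n := ⟨1, 0, by simp⟩
    push_cast
    rw [hφ.1 _ hm _ h1, ih, hφ.2.2]

theorem map_zpow (hφ : IsPhi n φ) (hn : n ≠ 0) (k : ℤ) : φ ((n : ℝ) ^ k) = 1 := by
  have hn' : (n : ℝ) ≠ 0 := Nat.cast_ne_zero.2 hn
  have hφn : φ n = 1 := by
    rw [hφ.map_natCast, ← Nat.sub_add_cancel (Nat.one_le_iff_ne_zero.2 hn)]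
    simp
  have hnS : (n : ℝ) ∈ zpows n := ⟨1, 1, by simp⟩
  induction k using Int.induction_on with
  | zero => simpa using hφ.2.2
  | succ k ih => rw [zpow_add_one₀ hn', hφ.2.1 _ (zpow_mem_zpows k) _ hnS, ih, hφn, mul_one]
  | pred k ih =>
    rw [← ih, ← mul_one (φ _), ← hφn, ← hφ.2.1 _ (zpow_mem_zpows _) _ hnS, ← zpow_add_one₀ hn',
      sub_add_cancel]

theorem map_sub (hφ : IsPhi n φ) (hn : n ≠ 0) {x y : ℝ} (hx : x ∈ zpows n) (hy : y ∈ zpows n) :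
    φ (x - y) = φ x - φ y := by
  have hxy : x - y ∈ zpows n := (zpowsSubring hn).sub_mem hx hy
  rw [eq_sub_iff_add_eq, ← hφ.1 _ hxy _ hy, sub_add_cancel]

theorem sub_eq_of_affine (hφ : IsPhi n φ) (hn : n ≠ 0) {f : ℝ → ℝ}
    (hf : MapsTo f (zpows n) (zpows n)) {k : ℤ} {c x y : ℝ} (hx : x ∈ zpows n)
    (hy : y ∈ zpows n) (hfx : f x = (n : ℝ) ^ k * x + c) (hfy : f y = (n : ℝ) ^ k * y + c) :
    φ (f y) - φ y = φ (f x) - φ x := by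
  have hdiff : f y - f x = (n : ℝ) ^ k * (y - x) := by rw [hfx, hfy]; ring
  have hyx : y - x ∈ zpows n := (zpowsSubring hn).sub_mem hy hx
  have := congrArg φ hdiff
  rw [hφ.map_sub hn (hf hy) (hf hx), hφ.2.1 _ (zpow_mem_zpows k) _ hyx, hφ.map_zpow hn,
    one_mul, hφ.map_sub hn hy hx] at this
  linear_combination this

end IsPhi

section PL

variable {n : ℕ} {φ : ℝ → ZMod (n - 1)} {f : ℝ → ℝ}

theorem exists_eqOn_Icc_of_forall_Ioo (hf : Continuous f) {a b : ℝ} (hab : a < b)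
    (h : ∀ y ∈ Ioo a b, ∃ (k : ℤ) (c : ℝ), ∀ᶠ z in 𝓝 y, f z = (n : ℝ) ^ k * z + c) :
    ∃ (k : ℤ) (c : ℝ), EqOn f (fun y => (n : ℝ) ^ k * y + c) (Icc a b) := by
  obtain ⟨k, c, hkc⟩ := h ((a + b) / 2) ⟨by linarith, by linarith⟩
  have hIoo := isPreconnected_Ioo.eqOn_affine_of_eventually_affine
    (fun y hy => by obtain ⟨k, c, hkc⟩ := h y hy; exact ⟨_, c, hkc⟩) ⟨by linarith, by linarith⟩ hkc
  refine ⟨k, c, ?_⟩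
  rw [← closure_Ioo hab.ne]
  exact hIoo.closure hf (by fun_prop)

theorem MemPL.exists_breaks (hf : MemPL n f) :
    ∃ B ⊆ zpows n, LocDiscrete B ∧
      ∀ x ∉ B, ∃ (k : ℤ) (c : ℝ), ∀ᶠ y in 𝓝 x, f y = (n : ℝ) ^ k * y + c := by
  obtain ⟨-, -, ⟨B, hBS, hBdisc, hpiece⟩, -⟩ := hf
  refine ⟨B, hBS, hBdisc, fun x hx => ?_⟩
  obtain ⟨k, c, ε, hε, h⟩ := hpiece x hx
  exact ⟨k, c, Metric.eventually_nhds_iff.2 ⟨ε, hε, fun y hy => h y (Real.dist_eq y x ▸ hy)⟩⟩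

theorem MemPL.eventually_phi_sub_eq (hn : 2 ≤ n) (hφ : IsPhi n φ) (hf : MemPL n f) (x : ℝ) :
    ∃ w, ∀ᶠ y in 𝓝[zpows n] x, φ (f y) - φ y = w := by
  obtain ⟨B, hBS, hBdisc, hpiece⟩ := hf.exists_breaks
  have hn0 : n ≠ 0 := by omega
  by_cases hxB : x ∈ B
  · have hxS := hBS hxB
    obtain ⟨ε, hε, hBε⟩ := hBdisc x
    have hreg : ∀ y ∈ Ioo (x - ε) (x + ε), y ≠ x → y ∉ B := fun y hy hne hyB =>
      hne (hBε y hyB (abs_sub_lt_iff.2 ⟨by linarith [hy.2], by linarith [hy.1]⟩))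
    have hfc : Continuous f := hf.1.monotone.continuous_of_surjective hf.2.1
    obtain ⟨k, c, hL⟩ := exists_eqOn_Icc_of_forall_Ioo (n := n) hfc (by linarith : x - ε / 2 < x)
      fun y hy => hpiece y (hreg y ⟨by linarith [hy.1], by linarith [hy.2]⟩ hy.2.ne)
    obtain ⟨k', c', hR⟩ := exists_eqOn_Icc_of_forall_Ioo (n := n) hfc (by linarith : x < x + ε / 2)
      fun y hy => hpiece y (hreg y ⟨by linarith [hy.1], by linarith [hy.2]⟩ hy.1.ne')
    refine ⟨φ (f x) - φ x, ?_⟩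
    filter_upwards [nhdsWithin_le_nhds (Icc_mem_nhds (by linarith : x - ε / 2 < x)
      (by linarith : x < x + ε / 2)), self_mem_nhdsWithin] with y hy hyS
    rcases le_total y x with hyx | hxy
    · exact hφ.sub_eq_of_affine hn0 hf.2.2.2 hxS hyS (hL (right_mem_Icc.2 (by linarith)))
        (hL ⟨hy.1, hyx⟩)
    · exact hφ.sub_eq_of_affine hn0 hf.2.2.2 hxS hyS (hR (left_mem_Icc.2 (by linarith)))
        (hR ⟨hxy, hy.2⟩)
  · obtain ⟨k, c, hkc⟩ := hpiece x hxB
    have := mem_closure_iff_nhdsWithin_neBot.1 (dense_zpows hn x)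
    have hkc' : ∀ᶠ y in 𝓝[zpows n] x, f y = (n : ℝ) ^ k * y + c ∧ y ∈ zpows n :=
      (hkc.filter_mono nhdsWithin_le_nhds).and eventually_mem_nhdsWithin
    obtain ⟨y₀, hy₀, hy₀S⟩ := hkc'.exists
    refine ⟨φ (f y₀) - φ y₀, ?_⟩
    filter_upwards [hkc'] with y ⟨hy, hyS⟩
    exact hφ.sub_eq_of_affine hn0 hf.2.2.2 hy₀S hyS hy₀ hy

theorem MemPL.phi_sub_eq (hn : 2 ≤ n) (hφ : IsPhi n φ) (hf : MemPL n f) {x y : ℝ}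
    (hx : x ∈ zpows n) (hy : y ∈ zpows n) :
    φ (f x) - φ x = φ (f y) - φ y :=
  (dense_zpows hn).apply_eq_of_eventually_const (hf.eventually_phi_sub_eq hn hφ) hx hy

end PL

/-- For every integer `n ≥ 2` there is a group homomorphism
`dₙ : PLₙ(ℝ) → ℤ/(n-1)ℤ` with `φₙ(f x) = φₙ x + dₙ f` for all `f ∈ PLₙ(ℝ)` and
`x ∈ ℤ[1/n]`; in particular `φₙ(f x) - φₙ x` is independent of `x ∈ ℤ[1/n]`. -/
theorem stmt_1 (n : ℕ) (hn : 2 ≤ n) (φ : ℝ → ZMod (n - 1)) (hφ : IsPhi n φ) :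
    ∃ d : (ℝ → ℝ) → ZMod (n - 1),
      (∀ f g : ℝ → ℝ, MemPL n f → MemPL n g → d (f ∘ g) = d f + d g) ∧
      (∀ f : ℝ → ℝ, MemPL n f → ∀ x ∈ zpows n, φ (f x) = φ x + d f) ∧
      (∀ f : ℝ → ℝ, MemPL n f → ∀ x ∈ zpows n, ∀ y ∈ zpows n,
        φ (f x) - φ x = φ (f y) - φ y) := by
  have h0 : (0 : ℝ) ∈ zpows n := ⟨0, 0, by simp⟩
  refine ⟨fun f => φ (f 0) - φ 0, fun f g hf hg => ?_, fun f hf x hx => ?_,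
    fun f hf x hx y hy => hf.phi_sub_eq hn hφ hx hy⟩
  · have hg0 : g 0 ∈ zpows n := hg.2.2.2 0 h0
    dsimp only [Function.comp_apply]
    rw [← hf.phi_sub_eq hn hφ hg0 h0]
    ring
  · dsimp only
    rw [← hf.phi_sub_eq hn hφ hx h0]
    ring
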